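/- The product of two orthonormal Legendre polynomials satisfies L_k(y) L_l(y) = Σ_{m=|k-l|}^{k+l} c(k,l,m) L_m(y), where c(k,l,m) is zero when k+l+m is odd and otherwise equals (A(g-k)A(g-l)A(g-m)/A(g)) · sqrt((2k+1)(2l+1)(2m+1))/(2g+1), with g = (k+l+m)/2 and A(n) = binomial(2n,n)/2^n. -/

import Mathlib

/-!
With `Pₙ = Lₙ / √(2n+1)` the classical Legendre polynomials, Rodrigues' formula yields
Bonnet's recurrence `(n+2) P_{n+2} = (2n+3) X P_{n+1} - (n+1) Pₙ`. Raising `k` by this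
recurrence and expanding each `X P_m = (m+1)/(2m+1) P_{m+1} + m/(2m+1) P_{m-1}`, Adams'
expansion `P_k P_l = ∑_{s ≤ min k l} c(k,l,s) P_{k+l-2s}` with
`c(k,l,s) = A(k-s) A(l-s) A(s) / A(k+l-s) · (2(k+l-2s)+1) / (2(k+l-s)+1)`
follows by induction on `k`, once `c` is checked to obey the induced three-term recurrence in
`k`. After `A(n+1) = A(n) (2n+1)/(n+1)` this is a rational identity, with separate boundary
versions where `k - s`, `l - s` or `s` reaches `0`. The substitution `m = k + l - 2s`,
`g = k + l - s` gives the stated coefficients.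
-/

open MeasureTheory Real Filter

/-- The `n`-th orthonormal Legendre polynomial on `[-1,1]` w.r.t. weight `1/2`,
via Rodrigues' formula. -/
noncomputable def L (n : ℕ) : ℝ → ℝ := fun y =>
  (Real.sqrt (2 * n + 1) / ((2 : ℝ) ^ n * n.factorial)) *
    iteratedDeriv n (fun t : ℝ => (t ^ 2 - 1) ^ n) y

/-- `A n = binomial(2n, n) / 2^n`. -/
noncomputable def A (n : ℕ) : ℝ := ((2 * n).choose n : ℝ) / 2 ^ n

open Polynomial Finset

theorem Polynomial.iterate_derivative_X_sq_sub_one_mul_derivative {R : Type*} [CommRing R]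
    (r : R[X]) (n : ℕ) :
    derivative^[n + 1] ((X ^ 2 - 1) * derivative r) =
      (X ^ 2 - 1) * derivative^[n + 2] r + 2 * ((n : R[X]) + 1) * X * derivative^[n + 1] r +
        (n : R[X]) * ((n : R[X]) + 1) * derivative^[n] r := by
  have h₁ := iterate_derivative_mul_X (n := n + 1) (derivative r * X)
  have h₂ := iterate_derivative_derivative_mul_X (n := n + 1) r
  have h₃ := iterate_derivative_derivative_mul_X (n := n) r
  have h₄ : derivative^[n + 1] (derivative r) = derivative^[n + 2] r :=
    (Function.iterate_succ_apply _ _ _).symm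
  rw [show (X ^ 2 - 1) * derivative r = derivative r * X * X - derivative r by ring,
    iterate_derivative_sub, h₁, h₂, Nat.add_sub_cancel, h₃, h₄]
  simp only [nsmul_eq_mul]
  push_cast
  ring

noncomputable def rodrigues (n : ℕ) : ℝ[X] := derivative^[n] ((X ^ 2 - 1) ^ n)

theorem derivative_X_sq_sub_one_pow_succ (n : ℕ) :
    derivative (((X : ℝ[X]) ^ 2 - 1) ^ (n + 1)) =
      2 * ((n : ℝ[X]) + 1) * X * (X ^ 2 - 1) ^ n := by
  rw [derivative_pow]
  simp only [derivative_sub, derivative_X_pow, derivative_one, Nat.add_sub_cancel,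
    C_eq_natCast]
  push_cast
  ring

theorem rodrigues_succ_succ (n : ℕ) :
    rodrigues (n + 2) = 2 * ((n : ℝ[X]) + 2) * (X * rodrigues (n + 1) +
      ((n : ℝ[X]) + 1) * derivative^[n] ((X ^ 2 - 1) ^ (n + 1))) := by
  have h := iterate_derivative_mul_X (n := n + 1) (((X : ℝ[X]) ^ 2 - 1) ^ (n + 1))
  rw [rodrigues, Function.iterate_succ_apply, derivative_X_sq_sub_one_pow_succ,
    show 2 * (((n + 1 : ℕ) : ℝ[X]) + 1) * X * (X ^ 2 - 1) ^ (n + 1) =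
      ((2 * (n + 2) : ℕ) : ℝ[X]) * ((X ^ 2 - 1) ^ (n + 1) * X) by push_cast; ring,
    iterate_derivative_natCast_mul, h, Nat.add_sub_cancel, rodrigues, nsmul_eq_mul]
  push_cast
  ring

theorem X_sq_sub_one_mul_derivative_rodrigues_succ (n : ℕ) :
    (X ^ 2 - 1) * derivative (rodrigues (n + 1)) =
      ((n : ℝ[X]) + 1) * ((n : ℝ[X]) + 2) * derivative^[n] ((X ^ 2 - 1) ^ (n + 1)) := by
  set v : ℝ[X] := (X ^ 2 - 1) ^ (n + 1)
  -- differentiate `(X² - 1) v' = 2(n+1) X v` a further `n + 1` times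
  have hv : (X ^ 2 - 1) * derivative v = ((2 * (n + 1) : ℕ) : ℝ[X]) * (v * X) := by
    rw [derivative_X_sq_sub_one_pow_succ]
    push_cast
    ring
  have h := congrArg (derivative^[n + 1]) hv
  rw [iterate_derivative_X_sq_sub_one_mul_derivative, iterate_derivative_natCast_mul,
    iterate_derivative_mul_X, Nat.add_sub_cancel, nsmul_eq_mul] at h
  rw [rodrigues, ← Function.iterate_succ_apply' derivative]
  push_cast at h
  linear_combination h

theorem rodrigues_succ (n : ℕ) :
    rodrigues (n + 1) = 2 * ((n : ℝ[X]) + 1) * X * rodrigues n +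
      2 * (X ^ 2 - 1) * derivative (rodrigues n) := by
  cases n with
  | zero =>
    simp [rodrigues]
    ring
  | succ n =>
    rw [rodrigues_succ_succ]
    push_cast
    linear_combination -2 * X_sq_sub_one_mul_derivative_rodrigues_succ n

theorem derivative_rodrigues_succ (n : ℕ) :
    derivative (rodrigues (n + 1)) =
      2 * ((n : ℝ[X]) + 1) *
        (X * derivative (rodrigues n) + ((n : ℝ[X]) + 1) * rodrigues n) := by
  have h := iterate_derivative_mul_X (n := n + 1) (((X : ℝ[X]) ^ 2 - 1) ^ n)
  rw [rodrigues, ← Function.iterate_succ_apply' derivative, Function.iterate_succ_apply,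
    derivative_X_sq_sub_one_pow_succ,
    show 2 * ((n : ℝ[X]) + 1) * X * (X ^ 2 - 1) ^ n =
      ((2 * (n + 1) : ℕ) : ℝ[X]) * ((X ^ 2 - 1) ^ n * X) by push_cast; ring,
    iterate_derivative_natCast_mul, h, Nat.add_sub_cancel, nsmul_eq_mul, rodrigues,
    ← Function.iterate_succ_apply' derivative]
  push_cast
  ring

theorem rodrigues_succ_succ_eq (n : ℕ) :
    rodrigues (n + 2) = 2 * (2 * (n : ℝ[X]) + 3) * X * rodrigues (n + 1) -
      4 * ((n : ℝ[X]) + 1) ^ 2 * rodrigues n := by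
  have h₁ := rodrigues_succ (n + 1)
  have h₂ := derivative_rodrigues_succ n
  have h₃ := rodrigues_succ n
  push_cast at h₁
  linear_combination h₁ + 2 * (X ^ 2 - 1) * h₂ - 2 * ((n : ℝ[X]) + 1) * X * h₃

noncomputable def legendre (n : ℕ) : ℝ[X] := C ((2 ^ n * n.factorial : ℝ)⁻¹) * rodrigues n

theorem legendre_zero : legendre 0 = 1 := by
  simp [legendre, rodrigues]

theorem legendre_one : legendre 1 = X := by
  rw [legendre, rodrigues, Function.iterate_one, derivative_X_sq_sub_one_pow_succ 0]
  simp [← mul_assoc, ← C_ofNat, ← C_mul]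

theorem eval_legendre_succ_succ (n : ℕ) (x : ℝ) :
    (n + 2) * (legendre (n + 2)).eval x =
      (2 * n + 3) * x * (legendre (n + 1)).eval x - (n + 1) * (legendre n).eval x := by
  simp only [legendre, eval_mul, eval_C, rodrigues_succ_succ_eq, eval_sub, eval_pow, eval_X,
    eval_add, eval_natCast, eval_ofNat, eval_one, Nat.factorial_succ, pow_succ]
  push_cast
  field_simp
  ring

theorem Polynomial.iteratedDeriv_eval {𝕜 : Type*} [NontriviallyNormedField 𝕜]
    (p : 𝕜[X]) (n : ℕ) :
    iteratedDeriv n (fun t => p.eval t) = fun t => (derivative^[n] p).eval t := by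
  induction n with
  | zero => simp
  | succ n ih =>
    ext t
    rw [iteratedDeriv_succ, ih, Function.iterate_succ_apply']
    exact Polynomial.deriv _

theorem L_eq_sqrt_mul_eval_legendre (n : ℕ) (y : ℝ) :
    L n y = √(2 * n + 1) * (legendre n).eval y := by
  have h : (fun t : ℝ => (t ^ 2 - 1) ^ n) = fun t => (((X : ℝ[X]) ^ 2 - 1) ^ n).eval t := by
    simp
  rw [L, h, iteratedDeriv_eval, legendre, eval_mul, eval_C, ← rodrigues]
  field_simp

theorem A_zero : A 0 = 1 := by
  simp [A]

theorem A_pos (n : ℕ) : 0 < A n := by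
  unfold A
  have := Nat.centralBinom_pos n
  rw [Nat.centralBinom] at this
  positivity

theorem A_succ (n : ℕ) : A (n + 1) = A n * (2 * n + 1) / (n + 1) := by
  have h : ((n : ℝ) + 1) * (n + 1).centralBinom = 2 * (2 * n + 1) * n.centralBinom := by
    exact_mod_cast Nat.succ_mul_centralBinom_succ n
  simp only [A, ← Nat.centralBinom_eq_two_mul_choose]
  field_simp
  linear_combination 2 ^ n * h

/-- Adams' coefficient of `P_{a+b}` in the product `P_{a+s} P_{b+s}`. -/
noncomputable def adamsCoeff (a b s : ℕ) : ℝ :=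
  A a * A b * A s / A (a + b + s) * (2 * (a + b) + 1) / (2 * (a + b + s) + 1)

noncomputable def raiseCoeff (m : ℕ) : ℝ := (m + 1) / (2 * m + 1)

noncomputable def lowerCoeff (m : ℕ) : ℝ := m / (2 * m + 1)

theorem adamsCoeff_rec (a b s : ℕ) :
    (a + s + 2) * adamsCoeff (a + 1) b (s + 1) =
      (2 * (a + s) + 3) * (adamsCoeff a b (s + 1) * raiseCoeff (a + b) +
        adamsCoeff (a + 1) (b + 1) s * lowerCoeff (a + b + 2)) -
      (a + s + 1) * adamsCoeff a (b + 1) s := by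
  simp only [adamsCoeff, raiseCoeff, lowerCoeff,
    show a + 1 + b + (s + 1) = a + b + s + 1 + 1 by ring,
    show a + b + (s + 1) = a + b + s + 1 by ring,
    show a + 1 + (b + 1) + s = a + b + s + 1 + 1 by ring,
    show a + (b + 1) + s = a + b + s + 1 by ring, A_succ]
  have := A_pos a
  have := A_pos b
  have := A_pos s
  have := A_pos (a + b + s)
  push_cast
  field_simp
  ring

theorem adamsCoeff_rec_of_s_eq_zero (k l : ℕ) :
    (k + 2) * adamsCoeff (k + 2) l 0 =
      (2 * k + 3) * (adamsCoeff (k + 1) l 0 * raiseCoeff (k + 1 + l)) := by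
  simp only [adamsCoeff, raiseCoeff, add_zero, show k + 2 + l = k + l + 1 + 1 by ring,
    show k + 1 + l = k + l + 1 by ring, show k + 2 = k + 1 + 1 by ring, A_succ]
  have := A_pos k
  have := A_pos l
  have := A_pos (k + l)
  push_cast
  field_simp
  ring

theorem adamsCoeff_rec_of_a_eq_zero (b k : ℕ) :
    (k + 2) * adamsCoeff 0 b (k + 2) =
      (2 * k + 3) * (adamsCoeff 0 (b + 1) (k + 1) * lowerCoeff (b + 1)) := by
  simp only [adamsCoeff, lowerCoeff, zero_add, show b + (k + 2) = b + k + 1 + 1 by ring,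
    show b + 1 + (k + 1) = b + k + 1 + 1 by ring, show k + 2 = k + 1 + 1 by ring, A_succ]
  have := A_pos k
  have := A_pos b
  have := A_pos (b + k)
  push_cast
  field_simp
  ring

theorem adamsCoeff_rec_of_b_eq_zero (a l : ℕ) :
    (2 * (a + l) + 3) * (adamsCoeff (a + 1) 0 l * lowerCoeff (a + 1)) =
      (a + l + 1) * adamsCoeff a 0 l := by
  simp only [adamsCoeff, lowerCoeff, add_zero, show a + 1 + l = a + l + 1 by ring, A_succ]
  have := A_pos a
  have := A_pos l
  have := A_pos (a + l)
  push_cast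
  field_simp
  ring

noncomputable def linCoeff (k l s : ℕ) : ℝ :=
  if s ≤ k ∧ s ≤ l then adamsCoeff (k - s) (l - s) s else 0

theorem linCoeff_of_eq {k l s a b : ℕ} (hk : k = a + s) (hl : l = b + s) :
    linCoeff k l s = adamsCoeff a b s := by
  subst hk hl
  simp [linCoeff]

theorem linCoeff_of_lt {k l s : ℕ} (h : k < s ∨ l < s) : linCoeff k l s = 0 :=
  if_neg (by omega)

theorem linCoeff_zero_zero (l : ℕ) : linCoeff 0 l 0 = 1 := by
  have := A_pos l
  simp [linCoeff, adamsCoeff, A_zero]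
  field_simp

theorem linCoeff_one_zero (l : ℕ) : linCoeff 1 l 0 = raiseCoeff l := by
  have := A_pos l
  simp [linCoeff, adamsCoeff, raiseCoeff, add_comm 1 l, A_succ, A_zero]
  field_simp

theorem linCoeff_one_one (l : ℕ) : linCoeff 1 l 1 = lowerCoeff l := by
  rcases l with _ | l
  · simp [linCoeff_of_lt, lowerCoeff]
  · have := A_pos l
    simp [linCoeff, adamsCoeff, lowerCoeff, A_succ, A_zero]
    field_simp

theorem linCoeff_rec_of_s_eq_zero (k l : ℕ) :
    (k + 2) * linCoeff (k + 2) l 0 =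
      (2 * k + 3) * (linCoeff (k + 1) l 0 * raiseCoeff (k + 1 + l)) := by
  simp only [linCoeff, zero_le, and_self, if_true, Nat.sub_zero]
  exact_mod_cast adamsCoeff_rec_of_s_eq_zero k l

theorem linCoeff_rec (k l s : ℕ) :
    (k + 2) * linCoeff (k + 2) l (s + 1) =
      (2 * k + 3) * (linCoeff (k + 1) l (s + 1) * raiseCoeff (k + 1 + l - 2 * (s + 1)) +
        linCoeff (k + 1) l s * lowerCoeff (k + 1 + l - 2 * s)) -
      (k + 1) * linCoeff k l s := by
  by_cases hs : k + 1 < s ∨ l < s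
  · rw [linCoeff_of_lt (k := k + 2) (s := s + 1) (by omega),
      linCoeff_of_lt (k := k + 1) (s := s + 1) (by omega),
      linCoeff_of_lt (k := k + 1) (s := s) (by omega), linCoeff_of_lt (k := k) (s := s) (by omega)]
    ring
  obtain ⟨hk, hl⟩ | ⟨rfl, hl⟩ | ⟨hk, rfl⟩ | ⟨rfl, rfl⟩ : (s ≤ k ∧ s < l) ∨
      (s = k + 1 ∧ s < l) ∨ (s ≤ k ∧ s = l) ∨ (s = k + 1 ∧ s = l) := by omega
  · obtain ⟨a, rfl⟩ : ∃ a, k = a + s := ⟨k - s, by omega⟩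
    obtain ⟨b, rfl⟩ : ∃ b, l = b + (s + 1) := ⟨l - (s + 1), by omega⟩
    rw [linCoeff_of_eq (a := a + 1) (b := b) (by omega) rfl,
      linCoeff_of_eq (a := a) (b := b) (by omega) rfl,
      linCoeff_of_eq (a := a + 1) (b := b + 1) (by omega) (by omega),
      linCoeff_of_eq (a := a) (b := b + 1) rfl (by omega),
      show a + s + 1 + (b + (s + 1)) - 2 * (s + 1) = a + b by omega,
      show a + s + 1 + (b + (s + 1)) - 2 * s = a + b + 2 by omega]
    push_cast
    linear_combination adamsCoeff_rec a b s
  · obtain ⟨b, rfl⟩ : ∃ b, l = b + (k + 2) := ⟨l - (k + 2), by omega⟩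
    rw [linCoeff_of_eq (a := 0) (b := b) (by omega) rfl,
      linCoeff_of_lt (k := k + 1) (s := k + 1 + 1) (by omega),
      linCoeff_of_eq (a := 0) (b := b + 1) (by omega) (by omega),
      linCoeff_of_lt (k := k) (s := k + 1) (by omega),
      show k + 1 + (b + (k + 2)) - 2 * (k + 1) = b + 1 by omega]
    linear_combination adamsCoeff_rec_of_a_eq_zero b k
  · obtain ⟨a, rfl⟩ : ∃ a, k = a + s := ⟨k - s, by omega⟩
    rw [linCoeff_of_lt (k := a + s + 2) (s := s + 1) (by omega),
      linCoeff_of_lt (k := a + s + 1) (s := s + 1) (by omega),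
      linCoeff_of_eq (a := a + 1) (b := 0) (by omega) (by omega),
      linCoeff_of_eq (a := a) (b := 0) rfl (by omega),
      show a + s + 1 + s - 2 * s = a + 1 by omega]
    push_cast
    linear_combination -adamsCoeff_rec_of_b_eq_zero a s
  · rw [linCoeff_of_lt (k := k + 2) (s := k + 1 + 1) (by omega),
      linCoeff_of_lt (k := k + 1) (s := k + 1 + 1) (by omega),
      linCoeff_of_lt (k := k) (s := k + 1) (by omega),
      show k + 1 + (k + 1) - 2 * (k + 1) = 0 by omega]
    simp [lowerCoeff]

theorem sum_linCoeff_rec (k l : ℕ) (g : ℕ → ℝ) :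
    (k + 2) * ∑ s ∈ range (k + 2), linCoeff (k + 2) l (s + 1) * g s =
      (2 * k + 3) * (∑ s ∈ range (k + 2), linCoeff (k + 1) l (s + 1) *
          (raiseCoeff (k + 1 + l - 2 * (s + 1)) * g s) +
        ∑ s ∈ range (k + 2), linCoeff (k + 1) l s * (lowerCoeff (k + 1 + l - 2 * s) * g s)) -
      (k + 1) * ∑ s ∈ range (k + 2), linCoeff k l s * g s := by
  rw [← sum_add_distrib, mul_sum, mul_sum, mul_sum, ← sum_sub_distrib]
  exact sum_congr rfl fun s _ => by linear_combination g s * linCoeff_rec k l s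

theorem sum_range_linCoeff_mul {k l n : ℕ} (hn : min k l < n) (g : ℕ → ℝ) :
    ∑ s ∈ range n, linCoeff k l s * g s =
      ∑ s ∈ range (min k l + 1), linCoeff k l s * g s := by
  refine (sum_subset (range_subset_range.2 (by omega)) fun s hs hs' => ?_).symm
  simp only [mem_range] at hs hs'
  rw [linCoeff_of_lt (by omega), zero_mul]

section Linearization

variable {x : ℝ} {u : ℕ → ℝ} (h₀ : u 0 = 1) (h₁ : u 1 = x)
  (hrec : ∀ n : ℕ, (n + 2) * u (n + 2) = (2 * n + 3) * x * u (n + 1) - (n + 1) * u n)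
include h₀ h₁ hrec

theorem mul_eq_raiseCoeff_add_lowerCoeff (m : ℕ) :
    x * u m = raiseCoeff m * u (m + 1) + lowerCoeff m * u (m - 1) := by
  cases m with
  | zero => simp [raiseCoeff, lowerCoeff, h₀, h₁]
  | succ n =>
    have h := hrec n
    simp only [raiseCoeff, lowerCoeff, Nat.add_sub_cancel]
    push_cast at h ⊢
    field_simp
    linear_combination -h

theorem linCoeff_mul_mul_eq_raise_add_lower (k l s : ℕ) :
    linCoeff (k + 1) l s * (x * u (k + 1 + l - 2 * s)) =
      linCoeff (k + 1) l s * (raiseCoeff (k + 1 + l - 2 * s) * u (k + 2 + l - 2 * s)) +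
        linCoeff (k + 1) l s * (lowerCoeff (k + 1 + l - 2 * s) * u (k + l - 2 * s)) := by
  rcases le_or_gt s (min (k + 1) l) with hs | hs
  · rw [mul_eq_raiseCoeff_add_lowerCoeff h₀ h₁ hrec,
      show k + 1 + l - 2 * s + 1 = k + 2 + l - 2 * s by omega,
      show k + 1 + l - 2 * s - 1 = k + l - 2 * s by omega]
    ring
  · simp [linCoeff_of_lt (k := k + 1) (l := l) (s := s) (by omega)]

theorem mul_eq_sum_linCoeff (k l : ℕ) :
    u k * u l = ∑ s ∈ range (min k l + 1), linCoeff k l s * u (k + l - 2 * s) := by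
  induction k using Nat.twoStepInduction with
  | zero => simp [linCoeff_zero_zero, h₀]
  | one =>
    rw [← sum_range_linCoeff_mul (n := 2) (by omega), sum_range_succ, sum_range_one,
      linCoeff_one_zero, linCoeff_one_one, h₁, mul_eq_raiseCoeff_add_lowerCoeff h₀ h₁ hrec,
      show 1 + l - 2 * 0 = l + 1 by omega, show 1 + l - 2 * 1 = l - 1 by omega]
  | more k ih₀ ih₁ =>
    have hx : x * (u (k + 1) * u l) =
        ∑ s ∈ range (k + 2), linCoeff (k + 1) l s *
          (raiseCoeff (k + 1 + l - 2 * s) * u (k + 2 + l - 2 * s)) +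
        ∑ s ∈ range (k + 2), linCoeff (k + 1) l s *
          (lowerCoeff (k + 1 + l - 2 * s) * u (k + l - 2 * s)) := by
      rw [ih₁, ← sum_range_linCoeff_mul (n := k + 2) (by omega), mul_sum, ← sum_add_distrib]
      exact sum_congr rfl fun s _ => by
        rw [← linCoeff_mul_mul_eq_raise_add_lower h₀ h₁ hrec]
        ring
    have hraise : ∑ s ∈ range (k + 2), linCoeff (k + 1) l s *
          (raiseCoeff (k + 1 + l - 2 * s) * u (k + 2 + l - 2 * s)) =
        ∑ s ∈ range (k + 2), linCoeff (k + 1) l (s + 1) *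
          (raiseCoeff (k + 1 + l - 2 * (s + 1)) * u (k + l - 2 * s)) +
        linCoeff (k + 1) l 0 * (raiseCoeff (k + 1 + l) * u (k + 2 + l)) := by
      rw [sum_range_linCoeff_mul (n := k + 2) (by omega),
        ← sum_range_linCoeff_mul (n := k + 3) (by omega), sum_range_succ']
      simp only [show ∀ s, k + 2 + l - 2 * (s + 1) = k + l - 2 * s by omega, mul_zero,
        Nat.sub_zero]
    have hprev : u k * u l = ∑ s ∈ range (k + 2), linCoeff k l s * u (k + l - 2 * s) := by
      rw [ih₀, sum_range_linCoeff_mul (n := k + 2) (by omega)]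
    have htarget :
        ∑ s ∈ range (min (k + 2) l + 1), linCoeff (k + 2) l s * u (k + 2 + l - 2 * s) =
        ∑ s ∈ range (k + 2), linCoeff (k + 2) l (s + 1) * u (k + l - 2 * s) +
          linCoeff (k + 2) l 0 * u (k + 2 + l) := by
      rw [← sum_range_linCoeff_mul (n := k + 3) (by omega), sum_range_succ']
      simp only [show ∀ s, k + 2 + l - 2 * (s + 1) = k + l - 2 * s by omega, mul_zero,
        Nat.sub_zero]
    apply mul_left_cancel₀ (show (k : ℝ) + 2 ≠ 0 by positivity)
    rw [htarget]
    linear_combination u l * hrec k + (2 * k + 3) * (hx + hraise) - (k + 1) * hprev -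
      sum_linCoeff_rec k l (fun s => u (k + l - 2 * s)) -
      u (k + 2 + l) * linCoeff_rec_of_s_eq_zero k l

end Linearization

theorem sum_Icc_ite_odd_eq_sum_range {M : Type*} [AddCommMonoid M] (k l : ℕ) (f : ℕ → M) :
    ∑ m ∈ Icc (max (k - l) (l - k)) (k + l), (if Odd (k + l + m) then 0 else f m) =
      ∑ s ∈ range (min k l + 1), f (k + l - 2 * s) := by
  rw [sum_ite, sum_const_zero, zero_add]
  symm
  refine sum_nbij' (fun s => k + l - 2 * s) (fun m => (k + l - m) / 2) ?_ ?_ ?_ ?_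
    fun _ _ => rfl <;>
  · intro s hs
    simp only [mem_range, mem_filter, mem_Icc, Nat.not_odd_iff_even, Nat.even_iff] at hs ⊢
    omega

theorem sqrt_mul_sqrt_mul_linCoeff {k l s : ℕ} (hs : s < min k l + 1) :
    √(2 * k + 1) * √(2 * l + 1) * linCoeff k l s =
      A ((k + l + (k + l - 2 * s)) / 2 - k) * A ((k + l + (k + l - 2 * s)) / 2 - l) *
        A ((k + l + (k + l - 2 * s)) / 2 - (k + l - 2 * s)) / A ((k + l + (k + l - 2 * s)) / 2) *
        √((2 * k + 1) * (2 * l + 1) * (2 * (k + l - 2 * s : ℕ) + 1)) /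
        (2 * ((k + l + (k + l - 2 * s)) / 2 : ℕ) + 1) * √(2 * (k + l - 2 * s : ℕ) + 1) := by
  obtain ⟨a, rfl⟩ : ∃ a, k = a + s := ⟨k - s, by omega⟩
  obtain ⟨b, rfl⟩ : ∃ b, l = b + s := ⟨l - s, by omega⟩
  rw [linCoeff_of_eq rfl rfl, adamsCoeff,
    show a + s + (b + s) + (a + s + (b + s) - 2 * s) = 2 * (a + b + s) by omega,
    show a + s + (b + s) - 2 * s = a + b by omega, Nat.mul_div_cancel_left _ two_pos,
    show a + b + s - (a + s) = b by omega, show a + b + s - (b + s) = a by omega,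
    show a + b + s - (a + b) = s by omega, sqrt_mul (by positivity), sqrt_mul (by positivity)]
  have := A_pos (a + b + s)
  have hm := sq_sqrt (show (0 : ℝ) ≤ 2 * ((a + b : ℕ) : ℝ) + 1 by positivity)
  push_cast at hm ⊢
  field_simp
  linear_combination (-(A a * A b * A s)) * hm

theorem legendre_linearization (k l : ℕ) (y : ℝ) :
    L k y * L l y =
      ∑ m ∈ Finset.Icc (max (k - l) (l - k)) (k + l),
        (if Odd (k + l + m) then 0 else
          A ((k + l + m) / 2 - k) * A ((k + l + m) / 2 - l) * A ((k + l + m) / 2 - m) /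
            A ((k + l + m) / 2) *
            Real.sqrt ((2 * k + 1) * (2 * l + 1) * (2 * m + 1)) /
            (2 * ((k + l + m) / 2 : ℕ) + 1)) * L m y := by
  have hlin := mul_eq_sum_linCoeff (u := fun n => (legendre n).eval y)
    (by simp [legendre_zero]) (by simp [legendre_one]) (fun n => eval_legendre_succ_succ n y) k l
  simp only [ite_mul, zero_mul, sum_Icc_ite_odd_eq_sum_range, L_eq_sqrt_mul_eval_legendre]
  rw [mul_mul_mul_comm, hlin, mul_sum]
  refine sum_congr rfl fun s hs => ?_
  rw [← mul_assoc, sqrt_mul_sqrt_mul_linCoeff (mem_range.1 hs)]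
  ring
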